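/- arXiv:1405.1607 — 4 statements merged into one kernel-verified Lean document; each statement's English description precedes it below -/
import Mathlib

section
/- Conversely, for a finite unital meet-semilattice E, every expression of the form u_e · ∏_{f ∈ E, f < e}(1 − u_f) with e ∈ E is a nonzero minimal projection, i.e. it is the indicator function of a single point of X. -/
/-- `X`: the set of (unital) semilattice characters `χ : E → {0,1}`. -/
abbrev SemilatticeChar (E : Type*) [Monoid E] : Type _ :=
  {χ : E → Bool // (∀ a b : E, χ (a * b) = (χ a && χ b)) ∧ χ 1 = true}

/-- The function `u_e : X → ℤ`, `u_e(χ) = χ(e)`. -/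
def uFun {E : Type*} [Monoid E] (e : E) : SemilatticeChar E → ℤ :=
  fun χ => if χ.1 e then 1 else 0

/-!
The up-set of `e` (for the order `f ≤ e ↔ e * f = f`) is a filter, so its indicator `χ_e` is a
character. The product `u_e · ∏_{f < e}(1 - u_f)` is the indicator of the characters `χ` with
`χ e = 1` and `χ f = 0` for all `f < e`, and each such `χ` is `χ_e`: if `e ≤ f` then `χ f = 1` by
multiplicativity, and otherwise `f * e < e`, so `0 = χ (f * e) = χ f · χ e = χ f`.
-/

theorem uFun_mul_prod_one_sub_uFun_apply {E : Type*} [Monoid E] (e : E) (s : Finset E)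
    (χ : SemilatticeChar E) :
    (uFun e * ∏ f ∈ s, (1 - uFun f)) χ =
      if χ.1 e = true ∧ ∀ f ∈ s, χ.1 f = false then 1 else 0 := by
  simp only [Pi.mul_apply, Finset.prod_apply, Pi.sub_apply, Pi.one_apply, uFun]
  have hfactor (f : E) :
      (1 - if χ.1 f = true then 1 else 0 : ℤ) = if χ.1 f = false then 1 else 0 := by
    cases χ.1 f <;> rfl
  simp only [hfactor, Finset.prod_boole, ite_and, ite_mul, one_mul, zero_mul]

section IdempotentCommMonoid

variable {E : Type*} [CommMonoid E]

theorem mul_mul_eq_right_iff {a b e : E} (ha : IsIdempotentElem a) (hb : IsIdempotentElem b) :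
    a * b * e = e ↔ a * e = e ∧ b * e = e := by
  refine ⟨fun h => ⟨?_, ?_⟩, fun ⟨hae, hbe⟩ => by rw [mul_assoc, hbe, hae]⟩
  · rw [← h, ← mul_assoc, ← mul_assoc, ha.eq]
  · rw [← h, mul_comm a, ← mul_assoc, ← mul_assoc, hb.eq]

variable [DecidableEq E] (hidem : ∀ x : E, IsIdempotentElem x)

def principalChar (e : E) : SemilatticeChar E :=
  ⟨fun f => decide (f * e = e),
    fun a b => by simp only [mul_mul_eq_right_iff (hidem a) (hidem b), Bool.decide_and],
    by simp⟩

theorem eq_principalChar_iff (e : E) (χ : SemilatticeChar E) :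
    χ = principalChar hidem e ↔ χ.1 e = true ∧ ∀ f, e * f = f → f ≠ e → χ.1 f = false := by
  constructor
  · rintro rfl
    refine ⟨decide_eq_true (hidem e).eq, fun f hf hne => decide_eq_false ?_⟩
    rwa [mul_comm, hf]
  · rintro ⟨he, hbelow⟩
    refine Subtype.ext (funext fun f => ?_)
    change χ.1 f = decide (f * e = e)
    by_cases hfe : f * e = e
    · have := χ.2.1 f e
      rw [hfe, he, Bool.and_true] at this
      simp [← this, hfe]
    · have := hbelow (f * e) (by rw [mul_left_comm, (hidem e).eq]) hfe
      rw [χ.2.1, he, Bool.and_true] at this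
      simp [this, hfe]

end IdempotentCommMonoid

/-- For a finite unital meet-semilattice `E`, every expression in standard form
`u_e · ∏_{f < e}(1 - u_f)` (with `f ≤ e` iff `e * f = f`) is a nonzero minimal
projection, namely the indicator function of the single point `χ_e ∈ X`, where
`χ_e(f) = 1` iff `e ≤ f` (i.e. `f * e = e`). -/
theorem standard_form_is_minimal_projection {E : Type*} [CommMonoid E] [Fintype E]
    [DecidableEq E] (hidem : ∀ e : E, e * e = e) (e : E) :
    ∃ χ0 : SemilatticeChar E,
      χ0.1 = (fun f : E => decide (f * e = e)) ∧
      (uFun e * ∏ f ∈ Finset.univ.filter (fun f : E => e * f = f ∧ f ≠ e), (1 - uFun f))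
        = fun χ => if χ = χ0 then 1 else 0 := by
  refine ⟨principalChar hidem e, rfl, funext fun χ => ?_⟩
  simp only [uFun_mul_prod_one_sub_uFun_apply, eq_principalChar_iff hidem, Finset.mem_filter,
    Finset.mem_univ, true_and, and_imp]
end

section
/- With notation as above, for every χ ∈ X define P_χ acting on B ⋊ E via the extension of the E-action β_e(b ⋊ f) = α_e(b) ⋊ ef (taking products of the operators β_e and (1 − β_f) according to χ). Then for every x ∈ B ⋊ E there is a unique element x_P ∈ ρ_P(B) such that x · P(1_B ⋊ 1) = (x_P ⋊ 1) · P(1_B ⋊ 1), where ρ_P = ∏_{e: χ(e)=1} α_e; moreover the map σ_P : B ⋊ E → B, σ_P(x) = x_P, is a *-homomorphism. -/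
/-- The idempotent set `E` of a unital inverse semigroup `S`. -/
abbrev Idem (S : Type*) [Monoid S] : Type _ := {e : S // e * e = e}

/-- The unit `1 ∈ E`. -/
def oneIdem (S : Type*) [Monoid S] : Idem S := ⟨1, one_mul 1⟩

/-- The convolution product of the algebraic crossed product `B ⋊ E`, whose elements
are encoded as functions `x : E → B`: `(x * y)(g) = ∑_{e f = g} x(e) α_e(y(f))`. -/
noncomputable def crossMul {S B : Type*} [Monoid S] [DecidableEq S] [Fintype (Idem S)]
    [CStarAlgebra B] (α : S → B →⋆ₙₐ[ℂ] B) (x y : Idem S → B) : Idem S → B :=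
  fun g => ∑ p : Idem S × Idem S,
    if p.1.1 * p.2.1 = g.1 then x p.1 * α p.1.1 (y p.2) else 0

/-- The elementary element `b ⋊ e` of `B ⋊ E`. -/
def elem {S B : Type*} [Monoid S] [DecidableEq S] [CStarAlgebra B]
    (b : B) (e : Idem S) : Idem S → B :=
  fun g => if g = e then b else 0

/-- The involution of `B ⋊ E`: `(b ⋊ e)* = α_e(b*) ⋊ e`. -/
noncomputable def crossStar {S B : Type*} [Monoid S] [CStarAlgebra B]
    (α : S → B →⋆ₙₐ[ℂ] B) (x : Idem S → B) : Idem S → B :=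
  fun f => α f.1 (star (x f))

/-- The extension `β_e` of the `E`-action to `B ⋊ E`: `β_e(b ⋊ f) = α_e(b) ⋊ ef`. -/
noncomputable def betaOp {S B : Type*} [Monoid S] [DecidableEq S] [Fintype (Idem S)]
    [CStarAlgebra B] (α : S → B →⋆ₙₐ[ℂ] B) (e : Idem S) :
    (Idem S → B) → (Idem S → B) :=
  fun x g => ∑ f : Idem S, if e.1 * f.1 = g.1 then α e.1 (x f) else 0

/-- The minimal projection `P = P_χ` of a character `χ` acting on `B ⋊ E`, the product
of the operators `β_e` (for `χ(e) = 1`) and `1 - β_f` (for `χ(f) = 0`). -/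
noncomputable def Pop {S B : Type*} [Monoid S] [DecidableEq S] [Fintype (Idem S)]
    [CStarAlgebra B] (α : S → B →⋆ₙₐ[ℂ] B) (χ : S → Bool) :
    (Idem S → B) → (Idem S → B) :=
  ((Finset.univ : Finset (Idem S)).toList.map
    (fun e => if χ e.1 then betaOp α e else fun x => x - betaOp α e x)).foldr (· ∘ ·) id

/-- The range projection `ρ_P = ∏_{χ(e)=1} α_e : B → B`. -/
noncomputable def rhoP {S B : Type*} [Monoid S] [Fintype (Idem S)]
    [CStarAlgebra B] (α : S → B →⋆ₙₐ[ℂ] B) (χ : S → Bool) : B → B :=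
  ((Finset.univ : Finset (Idem S)).toList.filter (fun e => χ e.1)).foldr
    (fun e g => ⇑(α e.1) ∘ g) id

/-!
Idempotents of an inverse monoid commute, so the product `m` of the idempotents `e` with
`χ(e) = 1` absorbs each of them and `ρ_P = α_m`. The operators `β_e` are commuting
idempotents, hence `β_e P = χ(e) P` on the image of `P`. Since
`(x · y)_g = ∑_e x_e β_e(y)_g`, this gives
`x · P(1 ⋊ 1) = (∑_{χ(e)=1} x_e ⋊ 1) · P(1 ⋊ 1)`; the entries of `P(1 ⋊ 1)` are fixed
by `α_m`, whose range is central, so `σ_P(x) = α_m (∑_{χ(e)=1} x_e)` is a coefficient.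
The map `σ_P` obeys the same rule `σ_P ∘ β_e = χ(e) σ_P`, so it is invariant under `P` and
multiplicative. Invariance gives `σ_P(P(1 ⋊ 1)) = α_m(1)`, and an element `d = α_m(d)` with
`d · P(1 ⋊ 1) = 0` is then `d · α_m(1) = 0`, which is uniqueness.
-/

section InverseMonoid

variable {S : Type*} [Monoid S] {inv : S → S}

theorem inv_eq_self_of_isIdempotentElem
    (huniq : ∀ s t, s * t * s = s → t * s * t = t → t = inv s)
    {e : S} (he : IsIdempotentElem e) : inv e = e :=
  (huniq e e (by rw [he.eq, he.eq]) (by rw [he.eq, he.eq])).symm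

theorem isIdempotentElem_mul_of_uniqueInverse
    (h1 : ∀ s, s * inv s * s = s) (h2 : ∀ s, inv s * s * inv s = inv s)
    (huniq : ∀ s t, s * t * s = s → t * s * t = t → t = inv s)
    {e f : S} (he : IsIdempotentElem e) (hf : IsIdempotentElem f) :
    IsIdempotentElem (e * f) := by
  set x := inv (e * f)
  have hx1 : e * f * x * (e * f) = e * f := h1 _
  have hx2 : x * (e * f) * x = x := h2 _
  -- `f x e` is another inverse of `e f`, so it is `x`; this makes `x`, hence `e f`, idempotent
  have hfxe : f * x * e = x := by
    refine huniq _ _ ?_ ?_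
    · calc e * f * (f * x * e) * (e * f) = e * (f * f) * x * (e * e) * f := by
            simp only [mul_assoc]
        _ = e * f := by rw [he.eq, hf.eq]; simpa only [mul_assoc] using hx1
    · calc f * x * e * (e * f) * (f * x * e) = f * (x * (e * e) * (f * f) * x) * e := by
            simp only [mul_assoc]
        _ = f * x * e := by rw [he.eq, hf.eq, mul_assoc x e f, hx2]
  have hx : IsIdempotentElem x := by
    change x * x = x
    conv_lhs => rw [← hfxe]
    calc f * x * e * (f * x * e) = f * (x * (e * f) * x) * e := by simp only [mul_assoc]
      _ = x := by rw [hx2, hfxe]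
  rwa [huniq x (e * f) hx2 hx1, inv_eq_self_of_isIdempotentElem huniq hx]

theorem commute_of_isIdempotentElem
    (h1 : ∀ s, s * inv s * s = s) (h2 : ∀ s, inv s * s * inv s = inv s)
    (huniq : ∀ s t, s * t * s = s → t * s * t = t → t = inv s)
    {e f : S} (he : IsIdempotentElem e) (hf : IsIdempotentElem f) : Commute e f := by
  have hef := isIdempotentElem_mul_of_uniqueInverse h1 h2 huniq he hf
  have hfe := isIdempotentElem_mul_of_uniqueInverse h1 h2 huniq hf he
  have hinv : f * e = inv (e * f) := by
    refine huniq _ _ ?_ ?_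
    · calc e * f * (f * e) * (e * f) = e * (f * f) * (e * e) * f := by simp only [mul_assoc]
        _ = e * f := by rw [he.eq, hf.eq, mul_assoc (e * f), hef.eq]
    · calc f * e * (e * f) * (f * e) = f * (e * e) * (f * f) * e := by simp only [mul_assoc]
        _ = f * e := by rw [he.eq, hf.eq, mul_assoc (f * e), hfe.eq]
  change e * f = f * e
  rw [hinv, inv_eq_self_of_isIdempotentElem huniq hef]

end InverseMonoid

namespace List

variable {M : Type*} [Monoid M] {L : List M}

theorem isIdempotentElem_prod_of_commute (hc : ∀ a ∈ L, ∀ b ∈ L, Commute a b)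
    (hL : ∀ a ∈ L, IsIdempotentElem a) : IsIdempotentElem L.prod := by
  induction L with
  | nil => exact IsIdempotentElem.one
  | cons h t ih =>
    have hct : ∀ a ∈ t, ∀ b ∈ t, Commute a b := fun a ha b hb =>
      hc a (mem_cons_of_mem h ha) b (mem_cons_of_mem h hb)
    rw [prod_cons]
    exact (hL h mem_cons_self).mul_of_commute
      (Commute.list_prod_right _ _ fun b hb => hc h mem_cons_self b (mem_cons_of_mem h hb))
      (ih hct fun a ha => hL a (mem_cons_of_mem h ha))

theorem prod_mul_of_mem_of_commute (hc : ∀ a ∈ L, ∀ b ∈ L, Commute a b)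
    (hL : ∀ a ∈ L, IsIdempotentElem a) {a : M} (ha : a ∈ L) : L.prod * a = L.prod := by
  induction L with
  | nil => simp at ha
  | cons h t ih =>
    have hct : ∀ a ∈ t, ∀ b ∈ t, Commute a b := fun a ha b hb =>
      hc a (mem_cons_of_mem h ha) b (mem_cons_of_mem h hb)
    rw [prod_cons, mul_assoc]
    rcases mem_cons.mp ha with rfl | ha
    · have hat : t.prod * a = a * t.prod := (Commute.list_prod_right _ _ fun b hb =>
          hc a mem_cons_self b (mem_cons_of_mem a hb)).symm.eq
      rw [hat, ← mul_assoc, (hL a mem_cons_self).eq]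
    · rw [ih hct (fun a ha => hL a (mem_cons_of_mem h ha)) ha]

end List

theorem sum_ite_val_eq {S M : Type*} [Monoid S] [DecidableEq S] [AddCommMonoid M]
    (t : Finset (Idem S)) {s : S} (hs : s * s = s) (F : Idem S → M) :
    (∑ k ∈ t, if s = k.1 then F k else 0) =
      if (⟨s, hs⟩ : Idem S) ∈ t then F ⟨s, hs⟩ else 0 := by
  rw [← Finset.sum_ite_eq t ⟨s, hs⟩ F]
  refine Finset.sum_congr rfl fun k _ => ?_
  simp only [Subtype.ext_iff]

section RangeProjection

open Finset

variable {S B : Type*} [Monoid S] [Fintype (Idem S)] [CStarAlgebra B]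
  (α : S → B →⋆ₙₐ[ℂ] B) (χ : S → Bool)

theorem exists_rhoP_eq_alpha (hα : ∀ s t : S, ∀ x : B, α (s * t) x = α s (α t x))
    (hα1 : ∀ x : B, α 1 x = x) (hcomm : ∀ e f : Idem S, Commute e.1 f.1) :
    ∃ m : S, IsIdempotentElem m ∧ (∀ e : Idem S, χ e.1 = true → m * e.1 = m) ∧
      rhoP α χ = ⇑(α m) := by
  set L := (univ : Finset (Idem S)).toList.filter (fun e => χ e.1)
  have hfold : ∀ l : List (Idem S),
      l.foldr (fun e g => ⇑(α e.1) ∘ g) id = ⇑(α (l.map Subtype.val).prod) := by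
    intro l
    induction l with
    | nil => funext z; simp [hα1]
    | cons e t ih => funext z; simp [ih, hα]
  have hc : ∀ a ∈ L.map Subtype.val, ∀ b ∈ L.map Subtype.val, Commute a b := by
    simp only [List.mem_map]
    rintro _ ⟨e, -, rfl⟩ _ ⟨f, -, rfl⟩
    exact hcomm e f
  have hi : ∀ a ∈ L.map Subtype.val, IsIdempotentElem a := by
    simp only [List.mem_map]
    rintro _ ⟨e, -, rfl⟩
    exact e.2
  refine ⟨_, List.isIdempotentElem_prod_of_commute hc hi,
    fun e he => List.prod_mul_of_mem_of_commute hc hi ?_, hfold L⟩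
  exact List.mem_map_of_mem (List.mem_filter.mpr ⟨mem_toList.mpr (mem_univ e), he⟩)

theorem rhoP_apply_eq_self {z : B} (hz : ∀ e : Idem S, χ e.1 = true → α e.1 z = z) :
    rhoP α χ z = z := by
  suffices ∀ l : List (Idem S), (∀ e ∈ l, α e.1 z = z) →
      l.foldr (fun e g => ⇑(α e.1) ∘ g) id z = z from
    this _ fun e he => hz e (List.mem_filter.mp he).2
  intro l hl
  induction l with
  | nil => rfl
  | cons e t ih =>
    rw [List.foldr_cons, Function.comp_apply, ih fun f hf => hl f (List.mem_cons_of_mem e hf),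
      hl e List.mem_cons_self]

/-- The coefficient map `σ_P`: in the theorem `m` is the product of the idempotents `e` with
`χ(e) = 1`, so that `α_m = ρ_P`. -/
noncomputable def sigmaP (m : S) : (Idem S → B) →ₗ[ℂ] B where
  toFun x := α m (∑ e ∈ univ.filter (fun e : Idem S => χ e.1), x e)
  map_add' x y := by simp only [Pi.add_apply, sum_add_distrib, map_add]
  map_smul' c x := by simp only [Pi.smul_apply, ← smul_sum, map_smul, RingHom.id_apply]

theorem sigmaP_apply (m : S) (x : Idem S → B) :
    sigmaP α χ m x = α m (∑ e ∈ univ.filter (fun e : Idem S => χ e.1), x e) := rfl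

theorem sigmaP_crossStar {m : S} (hme : ∀ e : Idem S, χ e.1 = true → m * e.1 = m)
    (hα : ∀ s t : S, ∀ x : B, α (s * t) x = α s (α t x)) (x : Idem S → B) :
    sigmaP α χ m (crossStar α x) = star (sigmaP α χ m x) := by
  rw [sigmaP_apply, sigmaP_apply, map_sum, map_sum, star_sum]
  refine sum_congr rfl fun f hf => ?_
  rw [crossStar, ← hα, hme f (mem_filter.mp hf).2, map_star]

end RangeProjection

section CrossedProduct

open Finset

variable {S B : Type*} [Monoid S] [DecidableEq S] [Fintype (Idem S)] [CStarAlgebra B]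
  (α : S → B →⋆ₙₐ[ℂ] B) (χ : S → Bool)

theorem betaOp_zero (e : Idem S) : betaOp α e (0 : Idem S → B) = 0 := by
  funext g
  simp [betaOp]

theorem betaOp_sub (e : Idem S) (x y : Idem S → B) :
    betaOp α e (x - y) = betaOp α e x - betaOp α e y := by
  funext g
  simp only [betaOp, Pi.sub_apply, map_sub, ← sum_sub_distrib]
  refine sum_congr rfl fun f _ => ?_
  split <;> simp

theorem betaOp_one (hα1 : ∀ x : B, α 1 x = x) (y : Idem S → B) :
    betaOp α (oneIdem S) y = y := by
  funext g
  simp only [betaOp, oneIdem, one_mul, hα1, ← Subtype.ext_iff, sum_ite_eq', mem_univ, if_true]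

theorem betaOp_betaOp (hα : ∀ s t : S, ∀ x : B, α (s * t) x = α s (α t x))
    (hcomm : ∀ e f : Idem S, Commute e.1 f.1) {e f g : Idem S} (hg : g.1 = e.1 * f.1)
    (y : Idem S → B) : betaOp α e (betaOp α f y) = betaOp α g y := by
  funext k
  simp only [betaOp, map_sum, apply_ite (α e.1), map_zero, ite_sum_zero]
  rw [sum_comm]
  refine sum_congr rfl fun j _ => ?_
  have hfj : (f.1 * j.1) * (f.1 * j.1) = f.1 * j.1 :=
    IsIdempotentElem.mul_of_commute (hcomm f j) f.2 j.2
  calc (∑ h : Idem S, if e.1 * h.1 = k.1 then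
          (if f.1 * j.1 = h.1 then α e.1 (α f.1 (y j)) else 0) else 0)
      = ∑ h : Idem S, if f.1 * j.1 = h.1 then
          (if e.1 * h.1 = k.1 then α e.1 (α f.1 (y j)) else 0) else 0 :=
        sum_congr rfl fun h _ => by split_ifs <;> simp_all
    _ = _ := by
        rw [sum_ite_val_eq univ hfj, if_pos (mem_univ _), ← mul_assoc, ← hα, ← hg]

theorem betaOp_comm (hα : ∀ s t : S, ∀ x : B, α (s * t) x = α s (α t x))
    (hcomm : ∀ e f : Idem S, Commute e.1 f.1) (e f : Idem S) (y : Idem S → B) :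
    betaOp α e (betaOp α f y) = betaOp α f (betaOp α e y) := by
  let ef : Idem S := ⟨e.1 * f.1, IsIdempotentElem.mul_of_commute (hcomm e f) e.2 f.2⟩
  rw [betaOp_betaOp α hα hcomm (g := ef) rfl, betaOp_betaOp α hα hcomm (g := ef) (hcomm e f).eq]

theorem betaOp_idem (hα : ∀ s t : S, ∀ x : B, α (s * t) x = α s (α t x))
    (hcomm : ∀ e f : Idem S, Commute e.1 f.1) (e : Idem S) (y : Idem S → B) :
    betaOp α e (betaOp α e y) = betaOp α e y :=
  betaOp_betaOp α hα hcomm e.2.symm y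

theorem crossMul_apply (x y : Idem S → B) (g : Idem S) :
    crossMul α x y g = ∑ e : Idem S, x e * betaOp α e y g := by
  simp only [crossMul, betaOp, Fintype.sum_prod_type, mul_sum, mul_ite, mul_zero]

theorem elem_one_crossMul (hα1 : ∀ x : B, α 1 x = x) (b : B) (y : Idem S → B) (g : Idem S) :
    crossMul α (elem b (oneIdem S)) y g = b * y g := by
  simp only [crossMul_apply, elem, ite_mul, zero_mul, sum_ite_eq', mem_univ, if_true,
    betaOp_one α hα1]

noncomputable def factorOp (e : Idem S) : (Idem S → B) → (Idem S → B) :=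
  if χ e.1 then betaOp α e else fun x => x - betaOp α e x

theorem factorOp_zero (e : Idem S) : factorOp α χ e (0 : Idem S → B) = 0 := by
  unfold factorOp
  split
  · exact betaOp_zero α e
  · exact sub_eq_zero.mpr (betaOp_zero α e).symm

theorem betaOp_factorOp (hα : ∀ s t : S, ∀ x : B, α (s * t) x = α s (α t x))
    (hcomm : ∀ e f : Idem S, Commute e.1 f.1) (e f : Idem S) (y : Idem S → B) :
    betaOp α e (factorOp α χ f y) = factorOp α χ f (betaOp α e y) := by
  unfold factorOp
  split
  · exact betaOp_comm α hα hcomm e f y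
  · rw [betaOp_sub, betaOp_comm α hα hcomm e f y]

theorem betaOp_foldr_factorOp (hα : ∀ s t : S, ∀ x : B, α (s * t) x = α s (α t x))
    (hcomm : ∀ e f : Idem S, Commute e.1 f.1) {e : Idem S} {l : List (Idem S)} (he : e ∈ l)
    (y : Idem S → B) :
    betaOp α e ((l.map (factorOp α χ)).foldr (· ∘ ·) id y) =
      if χ e.1 then (l.map (factorOp α χ)).foldr (· ∘ ·) id y else 0 := by
  induction l with
  | nil => simp at he
  | cons f t ih =>
    simp only [List.map_cons, List.foldr_cons, Function.comp_apply]
    rcases List.mem_cons.mp he with rfl | he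
    · generalize (t.map (factorOp α χ)).foldr (· ∘ ·) id y = z
      unfold factorOp
      split
      · exact betaOp_idem α hα hcomm e z
      · exact (betaOp_sub α e _ _).trans (sub_eq_zero.mpr (betaOp_idem α hα hcomm e z).symm)
    · rw [betaOp_factorOp α χ hα hcomm, ih he]
      split
      · rfl
      · exact factorOp_zero α χ f

theorem betaOp_Pop (hα : ∀ s t : S, ∀ x : B, α (s * t) x = α s (α t x))
    (hcomm : ∀ e f : Idem S, Commute e.1 f.1) (e : Idem S) (y : Idem S → B) :
    betaOp α e (Pop α χ y) = if χ e.1 then Pop α χ y else 0 :=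
  betaOp_foldr_factorOp α χ hα hcomm (mem_toList.mpr (mem_univ e)) y

theorem alpha_apply_of_betaOp_eq_self (hα : ∀ s t : S, ∀ x : B, α (s * t) x = α s (α t x))
    {e : Idem S} {y : Idem S → B} (h : betaOp α e y = y) (g : Idem S) : α e.1 (y g) = y g :=
  calc α e.1 (y g) = α e.1 (betaOp α e y g) := by rw [h]
    _ = betaOp α e y g := by
        simp only [betaOp, map_sum, apply_ite (α e.1), map_zero, ← hα, e.2]
    _ = y g := by rw [h]

theorem rhoP_Pop_apply (hα : ∀ s t : S, ∀ x : B, α (s * t) x = α s (α t x))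
    (hcomm : ∀ e f : Idem S, Commute e.1 f.1) (y : Idem S → B) (g : Idem S) :
    rhoP α χ (Pop α χ y g) = Pop α χ y g :=
  rhoP_apply_eq_self α χ fun e he =>
    alpha_apply_of_betaOp_eq_self α hα (by rw [betaOp_Pop α χ hα hcomm, if_pos he]) g

theorem crossMul_Pop_apply (hα : ∀ s t : S, ∀ x : B, α (s * t) x = α s (α t x))
    (hcomm : ∀ e f : Idem S, Commute e.1 f.1) {m : S} (hρ : rhoP α χ = ⇑(α m))
    (hcent : ∀ a b : B, α m a * b = a * α m b) (x y : Idem S → B) (g : Idem S) :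
    crossMul α x (Pop α χ y) g = sigmaP α χ m x * Pop α χ y g :=
  calc crossMul α x (Pop α χ y) g
      = (∑ e ∈ univ.filter (fun e : Idem S => χ e.1), x e) * Pop α χ y g := by
        rw [crossMul_apply, sum_mul, sum_filter]
        refine sum_congr rfl fun e _ => ?_
        rw [betaOp_Pop α χ hα hcomm]
        split <;> simp
    _ = sigmaP α χ m x * Pop α χ y g := by
        rw [sigmaP_apply, hcent, ← hρ, rhoP_Pop_apply α χ hα hcomm]

theorem sigmaP_elem_one {m : S} (hχone : χ 1 = true) (b : B) :
    sigmaP α χ m (elem b (oneIdem S)) = α m b := by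
  rw [sigmaP_apply]
  simp only [elem, sum_ite_eq', mem_filter, mem_univ, true_and]
  exact congrArg (α m) (if_pos hχone)

section Minimal

variable {m : S} (hme : ∀ e : Idem S, χ e.1 = true → m * e.1 = m)
  (hα : ∀ s t : S, ∀ x : B, α (s * t) x = α s (α t x))
  (hcomm : ∀ e f : Idem S, Commute e.1 f.1)
  (hχmul : ∀ e f : S, e * e = e → f * f = f → χ (e * f) = (χ e && χ f))

include hme hα hcomm hχmul

theorem sigmaP_betaOp (e : Idem S) (y : Idem S → B) :
    sigmaP α χ m (betaOp α e y) = if χ e.1 then sigmaP α χ m y else 0 := by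
  have hsum : ∑ g ∈ univ.filter (fun g : Idem S => χ g.1), betaOp α e y g =
      ∑ f, if χ (e.1 * f.1) then α e.1 (y f) else 0 := by
    simp only [betaOp]
    rw [sum_comm]
    refine sum_congr rfl fun f _ => ?_
    rw [sum_ite_val_eq _ (IsIdempotentElem.mul_of_commute (hcomm e f) e.2 f.2)]
    simp only [mem_filter, mem_univ, true_and]
  rw [sigmaP_apply, hsum, map_sum]
  by_cases he : χ e.1
  · rw [if_pos he, sigmaP_apply, map_sum, sum_filter]
    refine sum_congr rfl fun f _ => ?_
    rw [hχmul _ _ e.2 f.2, he, Bool.true_and, apply_ite (α m), map_zero, ← hα, hme e he]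
  · rw [if_neg he]
    exact sum_eq_zero fun f _ => by simp [hχmul _ _ e.2 f.2, he]

theorem sigmaP_foldr_factorOp (l : List (Idem S)) (y : Idem S → B) :
    sigmaP α χ m ((l.map (factorOp α χ)).foldr (· ∘ ·) id y) = sigmaP α χ m y := by
  induction l with
  | nil => rfl
  | cons f t ih =>
    rw [List.map_cons, List.foldr_cons, Function.comp_apply, ← ih]
    generalize (t.map (factorOp α χ)).foldr (· ∘ ·) id y = z
    unfold factorOp
    split
    · rw [sigmaP_betaOp α χ hme hα hcomm hχmul, if_pos ‹_›]
    · rw [map_sub, sigmaP_betaOp α χ hme hα hcomm hχmul, if_neg ‹_›, sub_zero]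

theorem sigmaP_Pop (y : Idem S → B) : sigmaP α χ m (Pop α χ y) = sigmaP α χ m y :=
  sigmaP_foldr_factorOp α χ hme hα hcomm hχmul _ y

theorem sigmaP_crossMul (x y : Idem S → B) :
    sigmaP α χ m (crossMul α x y) = sigmaP α χ m x * sigmaP α χ m y :=
  calc sigmaP α χ m (crossMul α x y) = ∑ e, α m (x e) * sigmaP α χ m (betaOp α e y) := by
        simp only [sigmaP_apply, crossMul_apply]
        rw [sum_comm, map_sum]
        refine sum_congr rfl fun e _ => ?_
        rw [← mul_sum, map_mul]
    _ = ∑ e ∈ univ.filter (fun e : Idem S => χ e.1), α m (x e) * sigmaP α χ m y := by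
        rw [sum_filter]
        refine sum_congr rfl fun e _ => ?_
        rw [sigmaP_betaOp α χ hme hα hcomm hχmul, mul_ite, mul_zero]
    _ = sigmaP α χ m x * sigmaP α χ m y := by
        rw [← sum_mul, sigmaP_apply α χ m x, map_sum]

theorem eq_zero_of_mul_Pop_eq_zero (hχone : χ 1 = true) {d : B} (hd : α m d = d)
    (h : ∀ g, d * Pop α χ (elem (1 : B) (oneIdem S)) g = 0) : d = 0 := by
  set P := Pop α χ (elem (1 : B) (oneIdem S))
  have hσP : ∑ g ∈ univ.filter (fun g : Idem S => χ g.1), α m (P g) = α m 1 := by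
    rw [← map_sum, ← sigmaP_apply, sigmaP_Pop α χ hme hα hcomm hχmul,
      sigmaP_elem_one α χ hχone]
  calc d = d * α m 1 := by rw [← hd, ← map_mul, mul_one, hd]
    _ = ∑ g ∈ univ.filter (fun g : Idem S => χ g.1), α m (d * P g) := by
        rw [← hσP, mul_sum]
        exact sum_congr rfl fun g _ => by rw [map_mul, hd]
    _ = 0 := sum_eq_zero fun g _ => by rw [h g, map_zero]

end Minimal

end CrossedProduct

/-- Let `S` be a unital inverse semigroup with finite idempotent set `E` acting on a
unital C*-algebra `B`, and let `χ` be a unital character on `E` with minimal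
projection `P` acting on `B ⋊ E`.  For every `x ∈ B ⋊ E` there is a unique
`x_P ∈ ρ_P(B)` with `x · P(1_B ⋊ 1) = (x_P ⋊ 1) · P(1_B ⋊ 1)`, and the resulting map
`σ_P : B ⋊ E → B`, `σ_P(x) = x_P`, is a *-homomorphism. -/
theorem exists_unique_coefficient_and_star_hom
    {S : Type*} [Monoid S] [DecidableEq S] [Fintype (Idem S)] (inv : S → S)
    (h1 : ∀ s, s * inv s * s = s) (h2 : ∀ s, inv s * s * inv s = inv s)
    (huniq : ∀ s t, s * t * s = s → t * s * t = t → t = inv s)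
    {B : Type*} [CStarAlgebra B]
    (α : S → B →⋆ₙₐ[ℂ] B)
    (hα : ∀ s t : S, ∀ x : B, α (s * t) x = α s (α t x))
    (hα1 : ∀ x : B, α 1 x = x)
    (hcentral : ∀ s : S, ∀ x y : B, α (s * inv s) x * y = x * α (s * inv s) y)
    (χ : S → Bool)
    (hχmul : ∀ e f : S, e * e = e → f * f = f → χ (e * f) = (χ e && χ f))
    (hχone : χ 1 = true) :
    ∃ σ : (Idem S → B) → B,
      -- existence and uniqueness of x_P = σ(x) for x ∈ B ⋊ E
      (∀ x : Idem S → B, (∀ f : Idem S, x f ∈ Set.range (α f.1)) →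
        σ x ∈ Set.range (rhoP α χ) ∧
        crossMul α x (Pop α χ (elem (1 : B) (oneIdem S)))
          = crossMul α (elem (σ x) (oneIdem S)) (Pop α χ (elem (1 : B) (oneIdem S))) ∧
        (∀ b ∈ Set.range (rhoP α χ),
          crossMul α x (Pop α χ (elem (1 : B) (oneIdem S)))
            = crossMul α (elem b (oneIdem S)) (Pop α χ (elem (1 : B) (oneIdem S))) →
          b = σ x)) ∧
      -- σ_P is a *-homomorphism on B ⋊ E
      (∀ x y : Idem S → B, (∀ f : Idem S, x f ∈ Set.range (α f.1)) →
        (∀ f : Idem S, y f ∈ Set.range (α f.1)) →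
        σ (x + y) = σ x + σ y ∧ σ (crossMul α x y) = σ x * σ y) ∧
      (∀ x : Idem S → B, (∀ f : Idem S, x f ∈ Set.range (α f.1)) →
        ∀ c : ℂ, σ (c • x) = c • σ x) ∧
      (∀ x : Idem S → B, (∀ f : Idem S, x f ∈ Set.range (α f.1)) →
        σ (crossStar α x) = star (σ x)) := by
  have hcomm : ∀ e f : Idem S, Commute e.1 f.1 := fun e f =>
    commute_of_isIdempotentElem h1 h2 huniq e.2 f.2
  obtain ⟨m, hm, hme, hρ⟩ := exists_rhoP_eq_alpha α χ hα hα1 hcomm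
  have hcent : ∀ a b : B, α m a * b = a * α m b := by
    simpa only [inv_eq_self_of_isIdempotentElem huniq hm, hm.eq] using hcentral m
  set P := Pop α χ (elem (1 : B) (oneIdem S))
  have hP : ∀ x b, crossMul α x P = crossMul α (elem b (oneIdem S)) P ↔
      ∀ g, sigmaP α χ m x * P g = b * P g := fun x b =>
    funext_iff.trans <| forall_congr' fun g => by
      rw [elem_one_crossMul α hα1, crossMul_Pop_apply α χ hα hcomm hρ hcent]
  refine ⟨sigmaP α χ m, fun x _ => ⟨?_, (hP x _).2 fun _ => rfl, ?_⟩,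
    fun x y _ _ => ⟨map_add _ x y, sigmaP_crossMul α χ hme hα hcomm hχmul x y⟩,
    fun x _ c => map_smul _ c x, fun x _ => sigmaP_crossStar α χ hme hα x⟩
  · exact ⟨_, congrFun hρ _⟩
  · rintro _ ⟨b, rfl⟩ hb
    rw [hρ] at hb ⊢
    refine sub_eq_zero.mp (eq_zero_of_mul_Pop_eq_zero α χ hme hα hcomm hχmul hχone ?_
      fun g => by rw [sub_mul, ← (hP x _).1 hb g, sub_self])
    rw [sigmaP_apply, ← map_sub, ← hα, hm.eq]
end

section
/- Explicitly, the *-homomorphism σ_P satisfies: σ_P(b ⋊ g) = 0 whenever χ(g) = 0, and σ_P(b ⋊ g) = ρ_P(b) whenever χ(g) = 1, for all elementary elements b ⋊ g of B ⋊ E. -/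
/-!
Idempotents of an inverse semigroup commute, so the idempotents on which `χ` is `1` multiply to
the least such idempotent `m`, and `ρ_P = α_m`. On the filter `χ⁻¹(1)` the factors `1 - β_f`
(`χ(f) = 0`) of `P` act as the identity and the factors `β_e` (`χ(e) = 1`) as translations, so the
`χ⁻¹(1)`-part of `P(1 ⋊ 1)` is `α_m(1) ⋊ m`. The coefficient at `m` of the defining identity of
`σ_P(b ⋊ g) = b'` therefore reads `[g m = m] b α_{gm}(1) = b' α_m(1) = b'`; and `g m = m` holds
exactly when `χ(g) = 1`, in which case `b α_m(1) = α_m(b)` by centrality of `α_m(1)`.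
-/

namespace InverseSemigroup

variable {S : Type*} [Monoid S] {inv : S → S}
  (h1 : ∀ s, s * inv s * s = s) (h2 : ∀ s, inv s * s * inv s = inv s)
  (huniq : ∀ s t, s * t * s = s → t * s * t = t → t = inv s)
include huniq

theorem inv_eq_self_of_isIdempotentElem {e : S} (he : IsIdempotentElem e) : inv e = e :=
  (huniq e e (by rw [he.eq, he.eq]) (by rw [he.eq, he.eq])).symm

include h1 h2

theorem inv_inv (s : S) : inv (inv s) = s :=
  (huniq (inv s) s (h2 s) (h1 s)).symm

theorem isIdempotentElem_mul {e f : S} (he : IsIdempotentElem e) (hf : IsIdempotentElem f) :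
    IsIdempotentElem (e * f) := by
  set x := inv (e * f)
  have hx : x * (e * f) * x = x := h2 _
  -- `f x e` is also an inverse of `e f`, hence equal to `x`
  have hfxe : f * x * e = x := by
    refine huniq _ _ ?_ ?_
    · calc e * f * (f * x * e) * (e * f) = e * f * x * (e * f) := by
            simp only [mul_assoc, ← mul_assoc f f, ← mul_assoc e e, hf.eq, he.eq]
        _ = e * f := h1 _
    · calc f * x * e * (e * f) * (f * x * e) = f * (x * (e * f) * x) * e := by
            simp only [mul_assoc, ← mul_assoc f f, ← mul_assoc e e, hf.eq, he.eq]
        _ = f * x * e := by rw [hx]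
  have hxx : IsIdempotentElem x := by
    calc x * x = f * (x * (e * f) * x) * e := by
          conv_lhs => rw [← hfxe]
          simp only [mul_assoc]
      _ = x := by rw [hx, hfxe]
  rw [IsIdempotentElem, ← inv_inv h1 h2 huniq (e * f), inv_eq_self_of_isIdempotentElem huniq hxx]
  exact hxx

theorem commute_of_isIdempotentElem {e f : S} (he : IsIdempotentElem e) (hf : IsIdempotentElem f) :
    Commute e f := by
  have hef := isIdempotentElem_mul h1 h2 huniq he hf
  have hfe := isIdempotentElem_mul h1 h2 huniq hf he
  have : f * e = inv (e * f) := by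
    refine huniq _ _ ?_ ?_
    · calc e * f * (f * e) * (e * f) = (e * f) * (e * f) := by
            simp only [mul_assoc, ← mul_assoc f f, ← mul_assoc e e, hf.eq, he.eq]
        _ = e * f := hef.eq
    · calc f * e * (e * f) * (f * e) = (f * e) * (f * e) := by
            simp only [mul_assoc, ← mul_assoc f f, ← mul_assoc e e, hf.eq, he.eq]
        _ = f * e := hfe.eq
  exact (this.trans (inv_eq_self_of_isIdempotentElem huniq hef)).symm

end InverseSemigroup

section IdempotentProducts

variable {S : Type*} [Monoid S]
  (hcomm : ∀ e f : S, IsIdempotentElem e → IsIdempotentElem f → Commute e f)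
include hcomm

theorem isIdempotentElem_list_prod {ℓ : List S} (hℓ : ∀ x ∈ ℓ, IsIdempotentElem x) :
    IsIdempotentElem ℓ.prod := by
  induction ℓ with
  | nil => exact IsIdempotentElem.one
  | cons a t ih =>
    have ht : ∀ x ∈ t, IsIdempotentElem x := fun x hx => hℓ x (List.mem_cons_of_mem a hx)
    have ha := hℓ a List.mem_cons_self
    exact ha.mul_of_commute
      (Commute.list_prod_right _ _ fun x hx => hcomm _ _ ha (ht x hx)) (ih ht)

theorem mul_list_prod_of_mem {ℓ : List S} (hℓ : ∀ x ∈ ℓ, IsIdempotentElem x) {e : S}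
    (he : e ∈ ℓ) : e * ℓ.prod = ℓ.prod := by
  induction ℓ with
  | nil => simp at he
  | cons a t ih =>
    have ht : ∀ x ∈ t, IsIdempotentElem x := fun x hx => hℓ x (List.mem_cons_of_mem a hx)
    rw [List.prod_cons]
    rcases List.mem_cons.mp he with rfl | he
    · rw [← mul_assoc, (hℓ e List.mem_cons_self).eq]
    · rw [← mul_assoc, (hcomm _ _ (hℓ e (List.mem_cons_of_mem a he)) (hℓ a List.mem_cons_self)).eq,
        mul_assoc, ih ht he]

theorem chi_list_prod_eq_true (χ : S → Bool)
    (hχmul : ∀ e f : S, e * e = e → f * f = f → χ (e * f) = (χ e && χ f)) (hχone : χ 1 = true)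
    {ℓ : List S} (hℓ : ∀ x ∈ ℓ, IsIdempotentElem x ∧ χ x = true) : χ ℓ.prod = true := by
  induction ℓ with
  | nil => exact hχone
  | cons a t ih =>
    have ht : ∀ x ∈ t, IsIdempotentElem x ∧ χ x = true :=
      fun x hx => hℓ x (List.mem_cons_of_mem a hx)
    have ha := hℓ a List.mem_cons_self
    rw [List.prod_cons, hχmul _ _ ha.1 (isIdempotentElem_list_prod hcomm fun x hx => (ht x hx).1),
      ha.2, ih ht, Bool.and_self]

end IdempotentProducts

section CharacterSupport

variable {S : Type*} [Monoid S]

/-- For `ℓ` listing all of `E`, the least idempotent in the filter `χ⁻¹(1)`. -/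
def chiProd (χ : S → Bool) (ℓ : List (Idem S)) : S :=
  ((ℓ.filter fun e => χ e.1).map Subtype.val).prod

theorem chiProd_cons (χ : S → Bool) (a : Idem S) (ℓ : List (Idem S)) :
    chiProd χ (a :: ℓ) = if χ a.1 then a.1 * chiProd χ ℓ else chiProd χ ℓ := by
  unfold chiProd
  cases h : χ a.1 <;> simp [h]

theorem chi_of_mul_eq {χ : S → Bool}
    (hχmul : ∀ e f : S, e * e = e → f * f = f → χ (e * f) = (χ e && χ f))
    {e f g : Idem S} (h : e.1 * f.1 = g.1) : χ g.1 = (χ e.1 && χ f.1) := by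
  rw [← h, hχmul _ _ e.2 f.2]

theorem rhoP_apply [Fintype (Idem S)] {B : Type*} [CStarAlgebra B] (α : S → B →⋆ₙₐ[ℂ] B)
    (χ : S → Bool) (hα : ∀ s t : S, ∀ x : B, α (s * t) x = α s (α t x))
    (hα1 : ∀ x : B, α 1 x = x) (b : B) :
    rhoP α χ b = α (chiProd χ (Finset.univ : Finset (Idem S)).toList) b := by
  unfold rhoP chiProd
  induction (Finset.univ : Finset (Idem S)).toList.filter (fun e => χ e.1) with
  | nil => simp [hα1]
  | cons a t ih =>
    simp only [List.foldr_cons, Function.comp_apply, ih, List.map_cons, List.prod_cons, hα]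

variable {χ : S → Bool} (hcomm : ∀ e f : S, IsIdempotentElem e → IsIdempotentElem f → Commute e f)
include hcomm

theorem isIdempotentElem_chiProd (ℓ : List (Idem S)) : IsIdempotentElem (chiProd χ ℓ) :=
  isIdempotentElem_list_prod hcomm fun x hx => by
    obtain ⟨e, -, rfl⟩ := List.mem_map.mp hx
    exact e.2

theorem chi_chiProd (hχmul : ∀ e f : S, e * e = e → f * f = f → χ (e * f) = (χ e && χ f))
    (hχone : χ 1 = true) (ℓ : List (Idem S)) : χ (chiProd χ ℓ) = true :=
  chi_list_prod_eq_true hcomm χ hχmul hχone fun x hx => by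
    obtain ⟨e, he, rfl⟩ := List.mem_map.mp hx
    exact ⟨e.2, (List.mem_filter.mp he).2⟩

theorem mul_chiProd_of_mem {ℓ : List (Idem S)} {e : Idem S} (he : e ∈ ℓ) (hχe : χ e.1 = true) :
    e.1 * chiProd χ ℓ = chiProd χ ℓ :=
  mul_list_prod_of_mem hcomm
    (fun x hx => by
      obtain ⟨f, -, rfl⟩ := List.mem_map.mp hx
      exact f.2)
    (List.mem_map_of_mem (List.mem_filter.mpr ⟨he, hχe⟩))

end CharacterSupport

section CrossedProduct

variable {S : Type*} [Monoid S] {B : Type*} [CStarAlgebra B]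

def chiPart (χ : S → Bool) (x : Idem S → B) : Idem S → B :=
  fun f => if χ f.1 then x f else 0

theorem chiPart_sub (χ : S → Bool) (x y : Idem S → B) :
    chiPart χ (x - y) = chiPart χ x - chiPart χ y := by
  funext f
  simp only [chiPart, Pi.sub_apply]
  split_ifs <;> simp

theorem chiPart_elem [DecidableEq S] {χ : S → Bool} {v : B} {M : Idem S} (hM : χ M.1 = true) :
    chiPart χ (elem v M) = elem v M := by
  funext f
  by_cases hf : f = M
  · simp [chiPart, hf, hM]
  · simp [chiPart, elem, hf]

variable [DecidableEq S] [Fintype (Idem S)] (α : S → B →⋆ₙₐ[ℂ] B)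

noncomputable def pFactor (χ : S → Bool) (e : Idem S) : (Idem S → B) → (Idem S → B) :=
  if χ e.1 then betaOp α e else fun x => x - betaOp α e x

theorem betaOp_elem (a M : Idem S) (v : B) (h : IsIdempotentElem (a.1 * M.1)) :
    betaOp α a (elem v M) = elem (α a.1 v) ⟨a.1 * M.1, h.eq⟩ := by
  funext g
  simp only [betaOp, elem]
  rw [Finset.sum_eq_single M (fun f _ hf => by simp [hf]) (by simp)]
  simp [Subtype.ext_iff, eq_comm]

theorem crossMul_elem_elem_apply (b c : B) (e f g : Idem S) :
    crossMul α (elem b e) (elem c f) g = if e.1 * f.1 = g.1 then b * α e.1 c else 0 := by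
  simp only [crossMul, elem]
  rw [Finset.sum_eq_single (e, f)]
  · simp
  · rintro ⟨e', f'⟩ - hne
    by_cases he : e' = e
    · subst he
      have hf : f' ≠ f := fun hf => hne (by rw [hf])
      simp [hf]
    · simp [he]
  · simp

variable {χ : S → Bool} (hχmul : ∀ e f : S, e * e = e → f * f = f → χ (e * f) = (χ e && χ f))
include hχmul

theorem chiPart_betaOp_of_true {a : Idem S} (ha : χ a.1 = true) (x : Idem S → B) :
    chiPart χ (betaOp α a x) = betaOp α a (chiPart χ x) := by
  funext g
  simp only [chiPart, betaOp]
  by_cases hg : χ g.1 = true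
  · rw [if_pos hg]
    refine Finset.sum_congr rfl fun f _ => ?_
    by_cases hfg : a.1 * f.1 = g.1
    · have hf : χ f.1 = true := by rwa [chi_of_mul_eq hχmul hfg, ha, Bool.true_and] at hg
      simp [hfg, hf]
    · simp [hfg]
  · rw [if_neg hg]
    refine (Finset.sum_eq_zero fun f _ => ?_).symm
    by_cases hfg : a.1 * f.1 = g.1
    · have hf : ¬χ f.1 = true := by rwa [chi_of_mul_eq hχmul hfg, ha, Bool.true_and] at hg
      simp [hfg, hf]
    · simp [hfg]

theorem chiPart_betaOp_of_false {a : Idem S} (ha : χ a.1 = false) (x : Idem S → B) :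
    chiPart χ (betaOp α a x) = 0 := by
  funext g
  simp only [chiPart, betaOp, Pi.zero_apply]
  split_ifs with hg
  · refine Finset.sum_eq_zero fun f _ => if_neg fun hfg => ?_
    rw [chi_of_mul_eq hχmul hfg, ha, Bool.false_and] at hg
    exact Bool.false_ne_true hg
  · rfl

theorem chiPart_pFactor (a : Idem S) (x : Idem S → B) :
    chiPart χ (pFactor α χ a x) = if χ a.1 then betaOp α a (chiPart χ x) else chiPart χ x := by
  unfold pFactor
  cases ha : χ a.1
  · simp [chiPart_sub, chiPart_betaOp_of_false α hχmul ha]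
  · simp [chiPart_betaOp_of_true α hχmul ha]

/-- `χ(ef) = 1` forces `χ(f) = 1`, so a coefficient over `χ⁻¹(1)` of `x y` only sees the
`χ⁻¹(1)`-part of `y`. -/
theorem crossMul_apply_chiPart (x y : Idem S → B) {g : Idem S} (hg : χ g.1 = true) :
    crossMul α x y g = crossMul α x (chiPart χ y) g := by
  refine Finset.sum_congr rfl fun p _ => ?_
  split_ifs with hp
  · rw [chi_of_mul_eq hχmul hp, Bool.and_eq_true] at hg
    simp [chiPart, hg.2]
  · rfl

variable (hα : ∀ s t : S, ∀ x : B, α (s * t) x = α s (α t x)) (hα1 : ∀ x : B, α 1 x = x)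
  (hcomm : ∀ e f : S, IsIdempotentElem e → IsIdempotentElem f → Commute e f) (hχone : χ 1 = true)
include hα hα1 hcomm hχone

theorem chiPart_foldr_pFactor (ℓ : List (Idem S)) :
    chiPart χ ((ℓ.map (pFactor α χ)).foldr (· ∘ ·) id (elem (1 : B) (oneIdem S))) =
      elem (α (chiProd χ ℓ) 1) ⟨chiProd χ ℓ, (isIdempotentElem_chiProd hcomm ℓ).eq⟩ := by
  induction ℓ with
  | nil => exact (chiPart_elem hχone).trans (congrArg₂ elem (hα1 1).symm rfl)
  | cons a t ih =>
    rw [List.map_cons, List.foldr_cons, Function.comp_apply, chiPart_pFactor α hχmul, ih]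
    by_cases ha : χ a.1 = true
    · have hprod : chiProd χ (a :: t) = a.1 * chiProd χ t := by rw [chiProd_cons, if_pos ha]
      rw [if_pos ha, betaOp_elem α a _ _ (hprod ▸ isIdempotentElem_chiProd hcomm (a :: t))]
      congr 1
      · rw [hprod, hα]
      · exact Subtype.ext hprod.symm
    · have hprod : chiProd χ (a :: t) = chiProd χ t := by rw [chiProd_cons, if_neg ha]
      rw [if_neg ha]
      congr 1
      · rw [hprod]
      · exact Subtype.ext hprod.symm

end CrossedProduct

theorem sigmaP_on_elementary_elements_general
    {S : Type*} [Monoid S] [DecidableEq S] [Fintype (Idem S)] (inv : S → S)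
    (h1 : ∀ s, s * inv s * s = s) (h2 : ∀ s, inv s * s * inv s = inv s)
    (huniq : ∀ s t, s * t * s = s → t * s * t = t → t = inv s)
    {B : Type*} [CStarAlgebra B]
    (α : S → B →⋆ₙₐ[ℂ] B)
    (hα : ∀ s t : S, ∀ x : B, α (s * t) x = α s (α t x))
    (hα1 : ∀ x : B, α 1 x = x)
    (hcentral : ∀ s : S, ∀ x y : B, α (s * inv s) x * y = x * α (s * inv s) y)
    (χ : S → Bool)
    (hχmul : ∀ e f : S, e * e = e → f * f = f → χ (e * f) = (χ e && χ f))
    (hχone : χ 1 = true)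
    (g : Idem S) (b : B)
    (b' : B) (hb' : b' ∈ Set.range (rhoP α χ))
    (hdef : crossMul α (elem b g) (Pop α χ (elem (1 : B) (oneIdem S)))
      = crossMul α (elem b' (oneIdem S)) (Pop α χ (elem (1 : B) (oneIdem S)))) :
    (χ g.1 = false → b' = 0) ∧ (χ g.1 = true → b' = rhoP α χ b) := by
  have hcomm : ∀ e f : S, IsIdempotentElem e → IsIdempotentElem f → Commute e f :=
    fun _ _ => InverseSemigroup.commute_of_isIdempotentElem h1 h2 huniq
  set m := chiProd χ (Finset.univ : Finset (Idem S)).toList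
  have hm : IsIdempotentElem m := isIdempotentElem_chiProd hcomm _
  have hχm : χ m = true := chi_chiProd hcomm hχmul hχone _
  have hP : chiPart χ (Pop α χ (elem (1 : B) (oneIdem S))) = elem (α m 1) ⟨m, hm.eq⟩ :=
    chiPart_foldr_pFactor α hχmul hα hα1 hcomm hχone _
  have key := congrFun hdef ⟨m, hm.eq⟩
  rw [crossMul_apply_chiPart α hχmul (elem b g) _ hχm,
    crossMul_apply_chiPart α hχmul (elem b' _) _ hχm, hP,
    crossMul_elem_elem_apply, crossMul_elem_elem_apply] at key
  obtain ⟨c, rfl⟩ := hb'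
  have hρ : ∀ x, rhoP α χ x = α m x := rhoP_apply α χ hα hα1
  have hcm : α m c * α 1 (α m 1) = α m c := by rw [hα1, ← map_mul, mul_one]
  simp only [hρ, oneIdem, one_mul, if_true, hcm] at key ⊢
  constructor
  · intro hg
    have hgm : g.1 * m ≠ m := fun h => by
      simpa [hg, hχm] using chi_of_mul_eq hχmul (f := ⟨m, hm.eq⟩) (g := ⟨m, hm.eq⟩) h
    rwa [if_neg hgm, eq_comm] at key
  · intro hg
    have hgm : g.1 * m = m :=
      mul_chiProd_of_mem hcomm (Finset.mem_toList.mpr (Finset.mem_univ g)) hg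
    have hαm : α m b = b * α m 1 := by
      simpa [InverseSemigroup.inv_eq_self_of_isIdempotentElem huniq hm, hm.eq] using hcentral m b 1
    rw [if_pos hgm, ← hα, hgm] at key
    rw [← key, hαm]

/-- Let `S` be a unital inverse semigroup with finite idempotent set `E` acting on a
unital C*-algebra `B`, `χ` a unital character on `E` with minimal projection `P`
acting on `B ⋊ E` and range projection `ρ_P = ∏_{χ(e)=1} α_e`.  The unique element
`x_P = σ_P(x)` with `x · P(1_B ⋊ 1) = (x_P ⋊ 1) · P(1_B ⋊ 1)` satisfies, for
elementary elements `x = b ⋊ g` (with `b ∈ α_g(B)`):  `σ_P(b ⋊ g) = 0` if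
`χ(g) = 0`, and `σ_P(b ⋊ g) = ρ_P(b)` if `χ(g) = 1`. -/
theorem sigmaP_on_elementary_elements
    {S : Type*} [Monoid S] [DecidableEq S] [Fintype (Idem S)] (inv : S → S)
    (h1 : ∀ s, s * inv s * s = s) (h2 : ∀ s, inv s * s * inv s = inv s)
    (huniq : ∀ s t, s * t * s = s → t * s * t = t → t = inv s)
    {B : Type*} [CStarAlgebra B]
    (α : S → B →⋆ₙₐ[ℂ] B)
    (hα : ∀ s t : S, ∀ x : B, α (s * t) x = α s (α t x))
    (hα1 : ∀ x : B, α 1 x = x)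
    (hcentral : ∀ s : S, ∀ x y : B, α (s * inv s) x * y = x * α (s * inv s) y)
    (χ : S → Bool)
    (hχmul : ∀ e f : S, e * e = e → f * f = f → χ (e * f) = (χ e && χ f))
    (hχone : χ 1 = true)
    (g : Idem S) (b : B) (hb : b ∈ Set.range (α g.1))
    (b' : B) (hb' : b' ∈ Set.range (rhoP α χ))
    (hdef : crossMul α (elem b g) (Pop α χ (elem (1 : B) (oneIdem S)))
      = crossMul α (elem b' (oneIdem S)) (Pop α χ (elem (1 : B) (oneIdem S)))) :
    (χ g.1 = false → b' = 0) ∧ (χ g.1 = true → b' = rhoP α χ b) :=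
  sigmaP_on_elementary_elements_general inv h1 h2 huniq α hα hα1 hcentral χ hχmul hχone g b b' hb'
    hdef
end

section
/- In the setting of an S-Hilbert B-module 𝓔 with finite idempotent set E, the diagonal projection 𝔻 = ∑_{χ ∈ X} P_χ ⊗ P_χ on the algebraic tensor product 𝓔 ⊗ 𝓕 of two S-Hilbert modules (with P_χ formed from the respective E-actions) commutes with the diagonal operators U_s ⊗ V_s for every s ∈ S. -/
open TensorProduct

/-- The set `X` of unital semilattice characters on the idempotents of `S`, encoded as
maps `χ : S → Bool` which are multiplicative on idempotents and unital. -/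
abbrev IdemChar (S : Type*) [Monoid S] : Type _ :=
  {χ : S → Bool //
    (∀ e f : S, e * e = e → f * f = f → χ (e * f) = (χ e && χ f)) ∧ χ 1 = true}

/-- The minimal projection `P_χ = ∏_{χ(e)=1} U_e · ∏_{χ(f)=0} (1 - U_f)` built from
the `E`-part of an `S`-action `U` by linear operators. -/
noncomputable def Pend {S : Type*} [Monoid S] [Fintype S] [DecidableEq S]
    {𝓔 : Type*} [AddCommGroup 𝓔] [Module ℂ 𝓔]
    (U : S → Module.End ℂ 𝓔) (χ : S → Bool) : Module.End ℂ 𝓔 :=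
  ((Finset.univ : Finset {e : S // e * e = e}).toList.map
    (fun e => if χ e.1 then U e.1 else 1 - U e.1)).prod

/-- The diagonal projection `𝔻 = ∑_{χ ∈ X} P_χ ⊗ P_χ` on the algebraic tensor
product `𝓔 ⊗ 𝓕`. -/
noncomputable def Dop {S : Type*} [Monoid S] [Fintype S] [DecidableEq S]
    {𝓔 𝓕 : Type*} [AddCommGroup 𝓔] [Module ℂ 𝓔] [AddCommGroup 𝓕] [Module ℂ 𝓕]
    (U : S → Module.End ℂ 𝓔) (V : S → Module.End ℂ 𝓕) :
    𝓔 ⊗[ℂ] 𝓕 →ₗ[ℂ] 𝓔 ⊗[ℂ] 𝓕 :=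
  ∑ χ : IdemChar S, TensorProduct.map (Pend U χ.1) (Pend V χ.1)

/-!
Write `s*` for the inverse of `s`. Idempotents of an inverse monoid commute, so
`U_s U_e = U_{s e s*} U_s` for every idempotent `e`; pushing `U_s` through the product defining
`P_χ` gives `U_s P_χ = P_{χ_s} U_s` if `χ(s*s) = 1` and `U_s P_χ = 0` otherwise, where
`χ_s(e) = χ(s* e s)`. Identifying the pushed product with `P_{χ_s}` (after multiplying by
`U_{ss*}`) uses that a product of commuting idempotents only depends on the set of its factors.
Likewise `P_ψ U_s = 0` when `ψ(ss*) = 0`, and `χ ↦ χ_s` is a bijection from the characters with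
`χ(s*s) = 1` onto those with `ψ(ss*) = 1`, inverse to `ψ ↦ ψ_{s*}`. Reindexing the sum defining
`𝔻` along this bijection turns `𝔻 (U_s ⊗ V_s)` into `(U_s ⊗ V_s) 𝔻`.
-/

section IdempotentProducts

variable {ι κ M : Type*}

theorem SemiconjBy.list_prod_map [Monoid M] {x : M} {f g : ι → M} {l : List ι}
    (h : ∀ i ∈ l, SemiconjBy x (f i) (g i)) : SemiconjBy x (l.map f).prod (l.map g).prod := by
  induction l with
  | nil => exact SemiconjBy.one_right x
  | cons i l ih =>
    simp only [List.map_cons, List.prod_cons]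
    exact (h i List.mem_cons_self).mul_right (ih fun j hj => h j (List.mem_cons_of_mem _ hj))

theorem Finset.prod_eq_prod_image_of_isIdempotentElem [CommMonoid M] [DecidableEq M]
    (s : Finset ι) (f : ι → M) (hf : ∀ i ∈ s, IsIdempotentElem (f i)) :
    ∏ i ∈ s, f i = ∏ m ∈ s.image f, m := by
  rw [Finset.prod_comp (fun m => m) f]
  refine Finset.prod_congr rfl fun m hm => ?_
  obtain ⟨i, hi, rfl⟩ := Finset.mem_image.1 hm
  exact (hf i hi).pow_eq (Finset.card_ne_zero.2 ⟨i, Finset.mem_filter.2 ⟨hi, rfl⟩⟩)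

theorem Fintype.prod_comp_eq_prod_of_isIdempotentElem [CommMonoid M] [Fintype ι] [Fintype κ]
    (y : ι → M) (hy : ∀ i, IsIdempotentElem (y i)) (σ : κ → ι) (τ : ι → κ)
    (hστ : ∀ i, y (σ (τ i)) = y i) : ∏ k, y (σ k) = ∏ i, y i := by
  classical
  have himage : Finset.univ.image (fun k => y (σ k)) = Finset.univ.image y := by
    ext m
    simp only [Finset.mem_image, Finset.mem_univ, true_and]
    exact ⟨fun ⟨k, hk⟩ => ⟨σ k, hk⟩, fun ⟨i, hi⟩ => ⟨τ i, (hστ i).trans hi⟩⟩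
  rw [Finset.prod_eq_prod_image_of_isIdempotentElem _ _ fun k _ => hy (σ k), himage,
    ← Finset.prod_eq_prod_image_of_isIdempotentElem _ _ fun i _ => hy i]

theorem Finset.prod_mul_of_isIdempotentElem [CommMonoid M] {s : Finset ι} (hs : s.Nonempty)
    (f : ι → M) {g : M} (hg : IsIdempotentElem g) :
    (∏ i ∈ s, f i) * g = ∏ i ∈ s, f i * g := by
  rw [Finset.prod_mul_distrib, Finset.prod_const, hg.pow_eq hs.card_pos.ne']

theorem Fintype.prod_ite_mul_of_isIdempotentElem [CommRing M] [Fintype ι] [DecidableEq ι]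
    (c : ι → Bool) (p : ι → M) {j : ι} (hj : IsIdempotentElem (p j)) :
    (∏ i, if c i then p i else 1 - p i) * p j
      = if c j then ∏ i, (if c i then p i else 1 - p i) else 0 := by
  rw [← Finset.prod_erase_mul _ _ (Finset.mem_univ j), mul_assoc]
  cases c j
  · simp [hj.one_sub_mul_self]
  · simp [hj.eq]

end IdempotentProducts

def IdempotentsCommute (S : Type*) [Monoid S] : Prop :=
  ∀ e f : S, IsIdempotentElem e → IsIdempotentElem f → Commute e f

namespace InverseMonoid

variable {S : Type*} [Monoid S] {inv : S → S}

theorem inv_eq_self (huniq : ∀ s t, s * t * s = s → t * s * t = t → t = inv s) {e : S}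
    (he : IsIdempotentElem e) : inv e = e :=
  (huniq e e (by rw [he.eq, he.eq]) (by rw [he.eq, he.eq])).symm

theorem isIdempotentElem_mul (h1 : ∀ s, s * inv s * s = s) (h2 : ∀ s, inv s * s * inv s = inv s)
    (huniq : ∀ s t, s * t * s = s → t * s * t = t → t = inv s) {x y : S}
    (hx : IsIdempotentElem x) (hy : IsIdempotentElem y) : IsIdempotentElem (x * y) := by
  obtain ⟨z, hz1, hz2, hz⟩ :
      ∃ z, x * y * z * (x * y) = x * y ∧ z * (x * y) * z = z ∧ z = inv (x * y) :=
    ⟨_, h1 _, h2 _, rfl⟩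
  have hyzx : y * z * x = z :=
    (huniq _ _ (by grind only [hx.eq, hy.eq]) (by grind only [hx.eq, hy.eq])).trans hz.symm
  have hz_idem : IsIdempotentElem z :=
    calc z * z = y * (z * (x * y) * z) * x := by
          nth_rw 1 [← hyzx]; nth_rw 2 [← hyzx]; simp only [mul_assoc]
      _ = z := by rw [hz2, hyzx]
  rwa [huniq z (x * y) hz2 hz1, inv_eq_self huniq hz_idem]

theorem idempotentsCommute (h1 : ∀ s, s * inv s * s = s)
    (h2 : ∀ s, inv s * s * inv s = inv s)
    (huniq : ∀ s t, s * t * s = s → t * s * t = t → t = inv s) : IdempotentsCommute S := by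
  intro e f he hf
  have hef := isIdempotentElem_mul h1 h2 huniq he hf
  have hfe := isIdempotentElem_mul h1 h2 huniq hf he
  have hfe_inv : f * e = inv (e * f) :=
    huniq _ _ (by grind only [he.eq, hf.eq, hef.eq]) (by grind only [he.eq, hf.eq, hfe.eq])
  exact (hfe_inv.trans (inv_eq_self huniq hef)).symm

end InverseMonoid

section Sandwich

variable {S : Type*} [Monoid S] {a b e f : S}

theorem isIdempotentElem_of_mul_mul_eq (hab : a * b * a = a) : IsIdempotentElem (a * b) := by
  rw [IsIdempotentElem, ← mul_assoc, hab]

theorem isIdempotentElem_sandwich (hc : IdempotentsCommute S) (hab : a * b * a = a)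
    (he : IsIdempotentElem e) : IsIdempotentElem (b * e * a) := by
  have h := hc e _ he (isIdempotentElem_of_mul_mul_eq hab)
  calc b * e * a * (b * e * a) = b * e * (a * b * e) * a := by simp only [mul_assoc]
    _ = b * (e * e) * (a * b * a) := by rw [← h.eq]; simp only [mul_assoc]
    _ = b * e * a := by rw [he.eq, hab]

theorem sandwich_sandwich (hc : IdempotentsCommute S) (hba : b * a * b = b)
    (he : IsIdempotentElem e) : b * (a * e * b) * a = e * (b * a) := by
  have h := hc e _ he (isIdempotentElem_of_mul_mul_eq hba)
  calc b * (a * e * b) * a = b * a * e * (b * a) := by simp only [mul_assoc]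
    _ = e * (b * a * b) * a := by rw [← h.eq]; simp only [mul_assoc]
    _ = e * (b * a) := by rw [hba, mul_assoc]

theorem sandwich_mul_sandwich (hc : IdempotentsCommute S) (hab : a * b * a = a)
    (hf : IsIdempotentElem f) : b * e * a * (b * f * a) = b * (e * f) * a := by
  have h := hc f _ hf (isIdempotentElem_of_mul_mul_eq hab)
  calc b * e * a * (b * f * a) = b * e * (a * b * f) * a := by simp only [mul_assoc]
    _ = b * (e * f) * (a * b * a) := by rw [← h.eq]; simp only [mul_assoc]
    _ = b * (e * f) * a := by rw [hab]

end Sandwich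

section Characters

variable {S : Type*} [Monoid S] [DecidableEq S] {a b : S}

/-- `χ_a = χ (b · a)` on idempotents; off the idempotents `χ` is kept, so that `conjChar b a`
inverts `conjChar a b` on all of `S → Bool`, the carrier of `IdemChar S`. -/
def conjChar (a b : S) (χ : S → Bool) : S → Bool :=
  fun t => if t * t = t then χ (b * t * a) else χ t

theorem conjChar_of_isIdempotentElem (χ : S → Bool) {t : S} (ht : IsIdempotentElem t) :
    conjChar a b χ t = χ (b * t * a) :=
  if_pos ht

theorem conjChar_one (χ : S → Bool) : conjChar a b χ 1 = χ (b * a) := by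
  rw [conjChar_of_isIdempotentElem χ IsIdempotentElem.one, mul_one]

theorem conjChar_apply_mul (hab : a * b * a = a) (hba : b * a * b = b) (χ : S → Bool) :
    conjChar a b χ (a * b) = χ (b * a) := by
  rw [conjChar_of_isIdempotentElem χ (isIdempotentElem_of_mul_mul_eq hab), ← mul_assoc, hba]

theorem conjChar_mul (hc : IdempotentsCommute S) (hab : a * b * a = a) {χ : S → Bool}
    (hχ : ∀ e f : S, e * e = e → f * f = f → χ (e * f) = (χ e && χ f)) :
    ∀ e f : S, e * e = e → f * f = f →
      conjChar a b χ (e * f) = (conjChar a b χ e && conjChar a b χ f) := by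
  intro e f he hf
  rw [conjChar_of_isIdempotentElem χ (IsIdempotentElem.mul_of_commute (hc e f he hf) he hf),
    conjChar_of_isIdempotentElem χ he, conjChar_of_isIdempotentElem χ hf,
    ← hχ _ _ (isIdempotentElem_sandwich hc hab he) (isIdempotentElem_sandwich hc hab hf),
    sandwich_mul_sandwich hc hab hf]

theorem conjChar_conjChar (hc : IdempotentsCommute S) (hba : b * a * b = b) {χ : S → Bool}
    (hχ : ∀ e f : S, e * e = e → f * f = f → χ (e * f) = (χ e && χ f))
    (hχba : χ (b * a) = true) : conjChar b a (conjChar a b χ) = χ := by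
  funext t
  by_cases ht : t * t = t
  · rw [conjChar_of_isIdempotentElem _ ht,
      conjChar_of_isIdempotentElem _ (isIdempotentElem_sandwich hc hba ht),
      sandwich_sandwich hc hba ht, hχ _ _ ht (isIdempotentElem_of_mul_mul_eq hba), hχba,
      Bool.and_true]
  · simp only [conjChar, if_neg ht]

theorem sum_filter_conjChar [Fintype S] {M : Type*} [AddCommMonoid M]
    (hc : IdempotentsCommute S) (hab : a * b * a = a) (hba : b * a * b = b)
    (F : (S → Bool) → M) :
    ∑ χ : IdemChar S with χ.1 (b * a) = true, F (conjChar a b χ.1)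
      = ∑ ψ : IdemChar S with ψ.1 (a * b) = true, F ψ.1 :=
  Finset.sum_bij'
    (fun χ hχ => ⟨conjChar a b χ.1, conjChar_mul hc hab χ.2.1,
      (conjChar_one _).trans (Finset.mem_filter.1 hχ).2⟩)
    (fun ψ hψ => ⟨conjChar b a ψ.1, conjChar_mul hc hba ψ.2.1,
      (conjChar_one _).trans (Finset.mem_filter.1 hψ).2⟩)
    (fun _ hχ => Finset.mem_filter.2 ⟨Finset.mem_univ _,
      (conjChar_apply_mul hab hba _).trans (Finset.mem_filter.1 hχ).2⟩)
    (fun _ hψ => Finset.mem_filter.2 ⟨Finset.mem_univ _,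
      (conjChar_apply_mul hba hab _).trans (Finset.mem_filter.1 hψ).2⟩)
    (fun χ hχ => Subtype.ext (conjChar_conjChar hc hba χ.2.1 (Finset.mem_filter.1 hχ).2))
    (fun ψ hψ => Subtype.ext (conjChar_conjChar hc hab ψ.2.1 (Finset.mem_filter.1 hψ).2))
    (fun _ _ => rfl)

end Characters

section MinimalProjections

open scoped IsMulCommutative

variable {S : Type*} [Monoid S] {𝓔 : Type*} [AddCommGroup 𝓔] [Module ℂ 𝓔]
  {U : S → Module.End ℂ 𝓔}

def idempotentSubalgebra (U : S → Module.End ℂ 𝓔) : Subalgebra ℂ (Module.End ℂ 𝓔) :=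
  Algebra.adjoin ℂ (U '' {e | e * e = e})

theorem mem_idempotentSubalgebra {e : S} (he : e * e = e) : U e ∈ idempotentSubalgebra U :=
  Algebra.subset_adjoin ⟨e, he, rfl⟩

theorem isMulCommutative_idempotentSubalgebra (hU : ∀ s t, U (s * t) = U s * U t)
    (hc : IdempotentsCommute S) : IsMulCommutative (idempotentSubalgebra U) :=
  Algebra.isMulCommutative_adjoin ℂ <| by
    rintro _ ⟨e, he, rfl⟩ _ ⟨f, hf, rfl⟩
    rw [← hU, ← hU, (hc e f he hf).eq]

variable [Fintype S] [DecidableEq S]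

theorem semiconjBy_Pend {x : Module.End ℂ 𝓔} {U' : S → Module.End ℂ 𝓔}
    (h : ∀ e : S, e * e = e → SemiconjBy x (U e) (U' e)) (χ : S → Bool) :
    SemiconjBy x (Pend U χ) (Pend U' χ) :=
  SemiconjBy.list_prod_map fun e _ => by
    by_cases hχ : χ e.1
    · rw [if_pos hχ, if_pos hχ]
      exact h e e.2
    · rw [if_neg hχ, if_neg hχ]
      exact (SemiconjBy.one_right x).sub_right (h e e.2)

theorem Pend_eq_coe_prod (B : Subalgebra ℂ (Module.End ℂ 𝓔)) [IsMulCommutative B]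
    (hUB : ∀ e : S, e * e = e → U e ∈ B) (χ : S → Bool) :
    Pend U χ = ↑(∏ e : {e : S // e * e = e},
      if χ e then (⟨U e, hUB e e.2⟩ : B) else 1 - ⟨U e, hUB e e.2⟩) := by
  rw [Pend, ← Finset.prod_map_toList, SubmonoidClass.coe_list_prod, List.map_map]
  congr 2
  funext e
  by_cases hχ : χ e.1 <;> simp [hχ]

theorem Pend_mul_of_isIdempotentElem (hU : ∀ s t, U (s * t) = U s * U t)
    (hc : IdempotentsCommute S) (χ : S → Bool) {e : S} (he : e * e = e) :
    Pend U χ * U e = if χ e then Pend U χ else 0 := by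
  have := isMulCommutative_idempotentSubalgebra hU hc
  let u : {e : S // e * e = e} → idempotentSubalgebra U :=
    fun e => ⟨U e, mem_idempotentSubalgebra e.2⟩
  have hp : IsIdempotentElem (u ⟨e, he⟩) :=
    Subtype.ext (by simp only [u, MulMemClass.mk_mul_mk, ← hU, he])
  have key := Fintype.prod_ite_mul_of_isIdempotentElem
    (fun e : {e : S // e * e = e} => χ e) u hp
  rw [Pend_eq_coe_prod _ (fun e he => mem_idempotentSubalgebra he)]
  simpa only [MulMemClass.coe_mul, apply_ite Subtype.val, ZeroMemClass.coe_zero]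
    using congrArg Subtype.val key

theorem commute_Pend (hU : ∀ s t, U (s * t) = U s * U t) (hc : IdempotentsCommute S)
    (χ : S → Bool) {e : S} (he : e * e = e) : Commute (U e) (Pend U χ) :=
  semiconjBy_Pend (fun f hf => by
    rw [SemiconjBy, ← hU, ← hU, (hc e f he hf).eq]) χ

variable {a b : S}

theorem Pend_mul_eq_zero (hU : ∀ s t, U (s * t) = U s * U t) (hc : IdempotentsCommute S)
    (hab : a * b * a = a) {χ : S → Bool} (hχ : χ (a * b) = false) : Pend U χ * U a = 0 := by
  rw [← hab, hU, ← mul_assoc, Pend_mul_of_isIdempotentElem hU hc χ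
    (isIdempotentElem_of_mul_mul_eq hab), hχ, if_neg Bool.false_ne_true, zero_mul]

theorem Pend_sandwich_mul (hU : ∀ s t, U (s * t) = U s * U t) (hc : IdempotentsCommute S)
    (hab : a * b * a = a) (hba : b * a * b = b) {χ : S → Bool}
    (hχ : ∀ e f : S, e * e = e → f * f = f → χ (e * f) = (χ e && χ f))
    (hχba : χ (b * a) = true) :
    Pend (fun t => U (a * t * b)) χ * U (a * b) = Pend U (conjChar a b χ) * U (a * b) := by
  have := isMulCommutative_idempotentSubalgebra hU hc
  let u : {e : S // e * e = e} → idempotentSubalgebra U :=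
    fun e => ⟨U e, mem_idempotentSubalgebra e.2⟩
  let σ : {e : S // e * e = e} → {e : S // e * e = e} :=
    fun e => ⟨a * e * b, isIdempotentElem_sandwich hc hba e.2⟩
  let τ : {e : S // e * e = e} → {e : S // e * e = e} :=
    fun f => ⟨b * f * a, isIdempotentElem_sandwich hc hab f.2⟩
  let g : {e : S // e * e = e} := ⟨a * b, isIdempotentElem_of_mul_mul_eq hab⟩
  have hu : ∀ e, IsIdempotentElem (u e) :=
    fun e => Subtype.ext (by simp only [u, MulMemClass.mk_mul_mk, ← hU, e.2])
  -- `y f` is the factor of `P_{χ_a} U_{ab}` at `f`; the left side is `∏ e, y (σ e)`, and as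
  -- `y ∘ σ ∘ τ = y` both are products over the same set of commuting idempotents.
  let y : {e : S // e * e = e} → idempotentSubalgebra U :=
    fun f => (if χ (b * f * a) then u f else 1 - u f) * u g
  have hy : ∀ f, IsIdempotentElem (y f) := fun f =>
    IsIdempotentElem.mul (by split_ifs; exacts [hu f, (hu f).one_sub]) (hu g)
  have hστ : ∀ f, u (σ (τ f)) * u g = u f * u g := fun f => Subtype.ext <| by
    simp only [u, σ, τ, g, MulMemClass.mk_mul_mk, ← hU]
    rw [sandwich_sandwich hc hab f.2, mul_assoc, (isIdempotentElem_of_mul_mul_eq hab).eq]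
  have hyστ : ∀ f, y (σ (τ f)) = y f := fun f => by
    have hcond : b * (σ (τ f) : S) * a = b * f * a := by simp only [σ, τ]; grind
    simp only [y, hcond]
    split_ifs
    · exact hστ f
    · rw [sub_mul, sub_mul, hστ f]
  have hyσ : ∀ e : {e : S // e * e = e},
      (if χ e then u (σ e) else 1 - u (σ e)) * u g = y (σ e) := fun e => by
    have hcond : χ (b * (σ e : S) * a) = χ e := by
      rw [sandwich_sandwich hc hba e.2, hχ _ _ e.2 (isIdempotentElem_of_mul_mul_eq hba), hχba,
        Bool.and_true]
    simp only [y, hcond]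
  have hne : (Finset.univ : Finset {e : S // e * e = e}).Nonempty :=
    ⟨⟨1, mul_one 1⟩, Finset.mem_univ _⟩
  have key : (∏ e : {e : S // e * e = e}, if χ e then u (σ e) else 1 - u (σ e)) * u g
      = (∏ f : {e : S // e * e = e}, if conjChar a b χ f then u f else 1 - u f) * u g := by
    rw [Finset.prod_mul_of_isIdempotentElem hne _ (hu g),
      Finset.prod_mul_of_isIdempotentElem hne _ (hu g)]
    simp only [hyσ]
    rw [Fintype.prod_comp_eq_prod_of_isIdempotentElem y hy σ τ hyστ]
    exact Finset.prod_congr rfl fun f _ => by rw [conjChar_of_isIdempotentElem _ f.2]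
  rw [Pend_eq_coe_prod _ fun e he => mem_idempotentSubalgebra (isIdempotentElem_sandwich hc hba he),
    Pend_eq_coe_prod _ fun e he => mem_idempotentSubalgebra he]
  exact congrArg Subtype.val key

theorem mul_Pend (hU : ∀ s t, U (s * t) = U s * U t) (hc : IdempotentsCommute S)
    (hab : a * b * a = a) (hba : b * a * b = b) {χ : S → Bool}
    (hχ : ∀ e f : S, e * e = e → f * f = f → χ (e * f) = (χ e && χ f)) :
    U a * Pend U χ = if χ (b * a) then Pend U (conjChar a b χ) * U a else 0 := by
  split_ifs with hχba
  · have hpush : SemiconjBy (U a) (Pend U χ) (Pend (fun t => U (a * t * b)) χ) :=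
      semiconjBy_Pend (fun e he => by
        have h := (hc e _ he (isIdempotentElem_of_mul_mul_eq hba)).eq
        rw [SemiconjBy, ← hU, ← hU, mul_assoc (a * e), mul_assoc a e, h, ← mul_assoc,
          ← mul_assoc, hab]) χ
    have haba : U (a * b) * U a = U a := by rw [← hU, hab]
    rw [hpush.eq, ← haba, ← mul_assoc, Pend_sandwich_mul hU hc hab hba hχ hχba, mul_assoc,
      haba]
  · have hbaa : U a * U (b * a) = U a := by rw [← hU, ← mul_assoc, hab]
    rw [← hbaa, mul_assoc, (commute_Pend hU hc χ (isIdempotentElem_of_mul_mul_eq hba)).eq,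
      Pend_mul_of_isIdempotentElem hU hc χ (isIdempotentElem_of_mul_mul_eq hba), if_neg hχba,
      mul_zero]

end MinimalProjections

theorem Dop_commutes_with_diagonal_action_general
    {S : Type*} [Monoid S] [Fintype S] [DecidableEq S] (inv : S → S)
    (h1 : ∀ s, s * inv s * s = s) (h2 : ∀ s, inv s * s * inv s = inv s)
    (huniq : ∀ s t, s * t * s = s → t * s * t = t → t = inv s)
    {𝓔 𝓕 : Type*} [AddCommGroup 𝓔] [Module ℂ 𝓔] [AddCommGroup 𝓕] [Module ℂ 𝓕]
    (U : S → Module.End ℂ 𝓔) (V : S → Module.End ℂ 𝓕)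
    (hUmul : ∀ s t : S, U (s * t) = U s * U t)
    (hVmul : ∀ s t : S, V (s * t) = V s * V t)
    (s : S) :
    (Dop U V).comp (TensorProduct.map (U s) (V s))
      = (TensorProduct.map (U s) (V s)).comp (Dop U V) := by
  have hc := InverseMonoid.idempotentsCommute h1 h2 huniq
  have hab := h1 s
  have hba := h2 s
  rw [← Module.End.mul_eq_comp, ← Module.End.mul_eq_comp, Dop, Finset.sum_mul, Finset.mul_sum]
  calc ∑ ψ : IdemChar S, map (Pend U ψ.1) (Pend V ψ.1) * map (U s) (V s)
      = ∑ ψ : IdemChar S with ψ.1 (s * inv s) = true,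
          map (Pend U ψ.1) (Pend V ψ.1) * map (U s) (V s) := by
        rw [Finset.sum_filter]
        refine Finset.sum_congr rfl fun ψ _ => ?_
        split_ifs with hψ
        · rfl
        · rw [← TensorProduct.map_mul, Pend_mul_eq_zero hUmul hc hab (Bool.eq_false_iff.2 hψ),
            TensorProduct.map_zero_left]
    _ = ∑ χ : IdemChar S with χ.1 (inv s * s) = true,
          map (Pend U (conjChar s (inv s) χ.1)) (Pend V (conjChar s (inv s) χ.1))
            * map (U s) (V s) :=
        (sum_filter_conjChar hc hab hba
          fun ψ => map (Pend U ψ) (Pend V ψ) * map (U s) (V s)).symm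
    _ = ∑ χ : IdemChar S, map (U s) (V s) * map (Pend U χ.1) (Pend V χ.1) := by
        rw [Finset.sum_filter]
        refine Finset.sum_congr rfl fun χ _ => ?_
        rw [← TensorProduct.map_mul, ← TensorProduct.map_mul, mul_Pend hUmul hc hab hba χ.2.1,
          mul_Pend hVmul hc hab hba χ.2.1]
        split_ifs
        · rw [TensorProduct.map_mul]
        · rw [TensorProduct.map_zero_left]

/-- Let `S` be a finite unital inverse semigroup and let `U`, `V` be unital
`S`-actions by linear operators on `𝓔` and `𝓕` (as in `S`-Hilbert modules).  Then the
diagonal projection `𝔻 = ∑_{χ ∈ X} P_χ ⊗ P_χ` on the algebraic tensor product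
`𝓔 ⊗ 𝓕` commutes with the diagonal operators `U_s ⊗ V_s` for every `s ∈ S`. -/
theorem Dop_commutes_with_diagonal_action
    {S : Type*} [Monoid S] [Fintype S] [DecidableEq S] (inv : S → S)
    (h1 : ∀ s, s * inv s * s = s) (h2 : ∀ s, inv s * s * inv s = inv s)
    (huniq : ∀ s t, s * t * s = s → t * s * t = t → t = inv s)
    {𝓔 𝓕 : Type*} [AddCommGroup 𝓔] [Module ℂ 𝓔] [AddCommGroup 𝓕] [Module ℂ 𝓕]
    (U : S → Module.End ℂ 𝓔) (V : S → Module.End ℂ 𝓕)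
    (hUmul : ∀ s t : S, U (s * t) = U s * U t) (hUone : U 1 = 1)
    (hVmul : ∀ s t : S, V (s * t) = V s * V t) (hVone : V 1 = 1)
    (s : S) :
    (Dop U V).comp (TensorProduct.map (U s) (V s))
      = (TensorProduct.map (U s) (V s)).comp (Dop U V) :=
  Dop_commutes_with_diagonal_action_general inv h1 h2 huniq U V hUmul hVmul s
end
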